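/- In Lewis' system Va = ⟨PC, ID, CSO, DAE; RCK⟩, the axiom CA is derivable: ⊢ (φ>χ)∧(ψ>χ) → (φ∨ψ > χ). -/
import Mathlib


inductive Form where
  | var : Nat → Form
  | bot : Form
  | neg : Form → Form
  | conj : Form → Form → Form
  | disj : Form → Form → Form
  | imp : Form → Form → Form
  | cond : Form → Form → Form

def Form.iff (p q : Form) : Form := Form.conj (Form.imp p q) (Form.imp q p)

/-- A boolean valuation respecting the classical connectives
(conditional subformulas are treated as atoms). -/
def ClassVal (v : Form → Bool) : Prop :=
  v Form.bot = false ∧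
  (∀ p, v (Form.neg p) = ! v p) ∧
  (∀ p q, v (Form.conj p q) = (v p && v q)) ∧
  (∀ p q, v (Form.disj p q) = (v p || v q)) ∧
  (∀ p q, v (Form.imp p q) = (! v p || v q))

/-- Classical tautologies. -/
def IsTaut (p : Form) : Prop := ∀ v, ClassVal v → v p = true

def conjList (l : List Form) : Form := l.foldr Form.conj (Form.neg Form.bot)

/-- Lewis' system Va = ⟨PC, ID, CSO, DAE; RCK⟩. -/
inductive Der : Form → Prop where
  | taut : ∀ p, IsTaut p → Der p
  | mp : ∀ p q, Der (Form.imp p q) → Der p → Der q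
  | id : ∀ p, Der (Form.cond p p)
  | cso : ∀ p q r, Der (Form.imp (Form.conj (Form.cond p q) (Form.cond q p))
      (Form.iff (Form.cond p r) (Form.cond q r)))
  | dae : ∀ p q r, Der (Form.disj (Form.cond (Form.disj p q) p)
      (Form.disj (Form.cond (Form.disj p q) q)
        (Form.iff (Form.cond (Form.disj p q) r)
          (Form.conj (Form.cond p r) (Form.cond q r)))))
  | rck : ∀ (l : List Form) (p q : Form), Der (Form.imp (conjList l) q) →
      Der (Form.imp (conjList (l.map (Form.cond p))) (Form.cond p q))


open Form in
lemma andIntroVa {a b : Form} (ha : Der a) (hb : Der b) : Der (Form.conj a b) := by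
  have t : Der (imp a (imp b (conj a b))) := Der.taut _ (by
    intro v hv; obtain ⟨h0,h1,h2,h3,h4⟩ := hv
    simp only [h4, h2]
    cases v a <;> cases v b <;> simp)
  exact Der.mp _ _ (Der.mp _ _ t ha) hb

open Form in
lemma derNegBot : Der (Form.neg Form.bot) := by
  refine Der.taut _ ?_
  intro v hv; obtain ⟨h0,h1,_⟩ := hv; simp [h1, h0]

open Form in
lemma condOrL (a b : Form) : Der (Form.cond a (Form.disj a b)) := by
  have h : Der (imp (conjList [a]) (disj a b)) := by
    refine Der.taut _ ?_
    intro v hv; obtain ⟨h0,h1,h2,h3,h4⟩ := hv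
    simp only [conjList, List.foldr, h4, h2, h3, h1, h0]
    cases v a <;> cases v b <;> simp
  have h2 := Der.rck [a] a (disj a b) h
  exact Der.mp _ _ h2 (andIntroVa (Der.id a) derNegBot)

open Form in
lemma condOrR (a b : Form) : Der (Form.cond b (Form.disj a b)) := by
  have h : Der (imp (conjList [b]) (disj a b)) := by
    refine Der.taut _ ?_
    intro v hv; obtain ⟨h0,h1,h2,h3,h4⟩ := hv
    simp only [conjList, List.foldr, h4, h2, h3, h1, h0]
    cases v a <;> cases v b <;> simp
  have h2 := Der.rck [b] b (disj a b) h
  exact Der.mp _ _ h2 (andIntroVa (Der.id b) derNegBot)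

open Form in
lemma caseA (a b r : Form) :
    Der (imp (cond (disj a b) a)
      (imp (conj (cond a r) (cond b r)) (cond (disj a b) r))) := by
  set A := cond (disj a b) r
  set S := cond a r
  set T := cond b r
  set X := cond (disj a b) a
  set Y := cond a (disj a b)
  have hY : Der Y := condOrL a b
  have hcso : Der (imp (conj X Y) (conj (imp A S) (imp S A))) := Der.cso (disj a b) a r
  have t : Der (imp (imp (conj X Y) (conj (imp A S) (imp S A)))
      (imp Y (imp X (imp (conj S T) A)))) := by
    refine Der.taut _ ?_
    intro v hv; obtain ⟨h0,h1,h2,h3,h4⟩ := hv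
    simp only [h4, h2]
    cases v X <;> cases v Y <;> cases v A <;> cases v S <;> cases v T <;> simp
  exact Der.mp _ _ (Der.mp _ _ t hcso) hY

open Form in
lemma caseB (a b r : Form) :
    Der (imp (cond (disj a b) b)
      (imp (conj (cond a r) (cond b r)) (cond (disj a b) r))) := by
  set A := cond (disj a b) r
  set S := cond a r
  set T := cond b r
  set X := cond (disj a b) b
  set Y := cond b (disj a b)
  have hY : Der Y := condOrR a b
  have hcso : Der (imp (conj X Y) (conj (imp A T) (imp T A))) := Der.cso (disj a b) b r
  have t : Der (imp (imp (conj X Y) (conj (imp A T) (imp T A)))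
      (imp Y (imp X (imp (conj S T) A)))) := by
    refine Der.taut _ ?_
    intro v hv; obtain ⟨h0,h1,h2,h3,h4⟩ := hv
    simp only [h4, h2]
    cases v X <;> cases v Y <;> cases v A <;> cases v S <;> cases v T <;> simp
  exact Der.mp _ _ (Der.mp _ _ t hcso) hY

/-- CA is derivable in Va. -/
theorem ca_derivable (p q r : Form) :
    Der (Form.imp (Form.conj (Form.cond p r) (Form.cond q r))
      (Form.cond (Form.disj p q) r)) := by
  have hA := caseA p q r
  have hB := caseB p q r
  have hdae := Der.dae p q r
  set A := Form.cond (Form.disj p q) r with hAdef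
  set S := Form.cond p r
  set T := Form.cond q r
  set X1 := Form.cond (Form.disj p q) p
  set X2 := Form.cond (Form.disj p q) q
  set G := Form.imp (Form.conj S T) A with hG
  have hC : Der (Form.imp (Form.iff A (Form.conj S T)) G) := by
    refine Der.taut _ ?_
    intro v hv; obtain ⟨h0,h1,h2,h3,h4⟩ := hv
    simp only [Form.iff, hG, h4, h2]
    cases v A <;> cases v S <;> cases v T <;> simp
  have telim : Der (Form.imp (Form.disj X1 (Form.disj X2 (Form.iff A (Form.conj S T))))
      (Form.imp (Form.imp X1 G) (Form.imp (Form.imp X2 G)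
        (Form.imp (Form.imp (Form.iff A (Form.conj S T)) G) G)))) := by
    refine Der.taut _ ?_
    intro v hv; obtain ⟨h0,h1,h2,h3,h4⟩ := hv
    simp only [Form.iff, hG, h4, h2, h3]
    cases v X1 <;> cases v X2 <;> cases v A <;> cases v S <;> cases v T <;> simp
  exact Der.mp _ _ (Der.mp _ _ (Der.mp _ _ (Der.mp _ _ telim hdae) hA) hB) hC
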